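/- Assume w_s and w_g are nonincreasing on [0, π], and let γ_g ∈ (0, π) and γ_s ∈ [γ_g/2, π]. Let X(Δ) be the number of pairs (i,j) ∈ ℐ with i² + 3j² ≤ 4h²·tan²(γ_g/2)/Δ², and set I_min = p·(h²·(1 + tan²(γ_g/2)))^{−α/2}·w_s(γ_s)·w_g(γ_g). Then η(Δ) ≥ X(Δ)·I_min/σ², and consequently R^reg(Δ) ≤ (2/(Δ²·√3))·log₂(1 + p·h^{−α}/(X(Δ)·I_min + σ²)). -/
import Mathlib


open Real

/-- Distance `‖s_{i,j}‖ = sqrt((iΔ/2)² + 3(jΔ/2)² + h²)` from the origin terminal to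
satellite `s_{i,j}` of the regular configuration. -/
noncomputable def snorm (Δ h : ℝ) (i j : ℤ) : ℝ :=
  Real.sqrt ((i * Δ / 2) ^ 2 + 3 * (j * Δ / 2) ^ 2 + h ^ 2)

/-- Off-axis angle `θ^reg_{i,j}(Δ) = arccos(h/‖s_{i,j}‖)`. -/
noncomputable def θreg (Δ h : ℝ) (i j : ℤ) : ℝ :=
  Real.arccos (h / snorm Δ h i j)

/-- Aggregate interference-to-noise ratio `η(Δ)` of the regular configuration. -/
noncomputable def ηreg (ws wg : ℝ → ℝ) (h α p σ2 : ℝ) (Δ : ℝ) : ℝ :=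
  (p / σ2) * ∑' q : ℤ × ℤ,
    if q.1 % 2 = q.2 % 2 ∧ q ≠ (0, 0) then
      snorm Δ h q.1 q.2 ^ (-α) * (ws (θreg Δ h q.1 q.2) * wg (θreg Δ h q.1 q.2))
    else 0

/-- Spectral efficiency of the regular configuration,
`R^reg(Δ) = (2/(Δ²√3))·log₂(1 + γ/(η(Δ) + 1))` with `γ = (p/σ²)h^{−α}`. -/
noncomputable def Rreg (ws wg : ℝ → ℝ) (h α p σ2 : ℝ) (Δ : ℝ) : ℝ :=
  (2 / (Δ ^ 2 * Real.sqrt 3)) *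
    Real.logb 2 (1 + (p / σ2) * h ^ (-α) / (ηreg ws wg h α p σ2 Δ + 1))

/-- `X(Δ)`: the number of interfering satellites `(i,j) ∈ ℐ` lying in the beam region
of the ground terminal, i.e. with `i² + 3j² ≤ 4h²tan²(γ_g/2)/Δ²`. -/
noncomputable def Xcount (h Δ γg : ℝ) : ℕ :=
  {q : ℤ × ℤ | (q.1 % 2 = q.2 % 2 ∧ q ≠ (0, 0)) ∧
    (q.1 : ℝ) ^ 2 + 3 * (q.2 : ℝ) ^ 2 ≤ 4 * h ^ 2 * Real.tan (γg / 2) ^ 2 / Δ ^ 2}.ncard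

/-- `I_min = p·(h²(1 + tan²(γ_g/2)))^{−α/2}·w_s(γ_s)·w_g(γ_g)`: a lower bound on the
interference power received from any single satellite in the beam region. -/
noncomputable def Imin (ws wg : ℝ → ℝ) (h α p γs γg : ℝ) : ℝ :=
  p * (h ^ 2 * (1 + Real.tan (γg / 2) ^ 2)) ^ (-(α / 2)) * (ws γs * wg γg)

/-- Upper bound on the spectral efficiency of the regular configuration:
`η(Δ) ≥ X(Δ)·I_min/σ²` and hence
`R^reg(Δ) ≤ (2/(Δ²√3))·log₂(1 + p·h^{−α}/(X(Δ)·I_min + σ²))`. -/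
theorem Rreg_upper_bound
    (ws wg : ℝ → ℝ) (h α p σ2 Δ : ℝ)
    (hh : 0 < h) (hα : 2 ≤ α) (hp : 0 < p) (hσ : 0 < σ2) (hΔ : 0 < Δ)
    (hwsnn : ∀ θ ∈ Set.Icc (0 : ℝ) π, 0 ≤ ws θ)
    (hwgnn : ∀ θ ∈ Set.Icc (0 : ℝ) π, 0 ≤ wg θ)
    (hws : AntitoneOn ws (Set.Icc (0 : ℝ) π))
    (hwg : AntitoneOn wg (Set.Icc (0 : ℝ) π))
    (γs γg : ℝ) (hγg : γg ∈ Set.Ioo (0 : ℝ) π) (hγs : γs ∈ Set.Icc (γg / 2) π)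
    (hsum : Summable fun q : ℤ × ℤ =>
      if q.1 % 2 = q.2 % 2 ∧ q ≠ (0, 0) then
        snorm Δ h q.1 q.2 ^ (-α) * (ws (θreg Δ h q.1 q.2) * wg (θreg Δ h q.1 q.2))
      else 0) :
    (Xcount h Δ γg : ℝ) * Imin ws wg h α p γs γg / σ2 ≤ ηreg ws wg h α p σ2 Δ ∧
    Rreg ws wg h α p σ2 Δ ≤ (2 / (Δ ^ 2 * Real.sqrt 3)) *
      Real.logb 2 (1 + p * h ^ (-α) / ((Xcount h Δ γg : ℝ) * Imin ws wg h α p γs γg + σ2)) := by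
  obtain ⟨hγg0, hγgπ⟩ := hγg
  obtain ⟨hγs1, hγs2⟩ := hγs
  have hπ := Real.pi_pos
  set t := Real.tan (γg / 2) with ht
  have hcos : 0 < Real.cos (γg / 2) :=
    Real.cos_pos_of_mem_Ioo ⟨by linarith, by linarith⟩
  have ht0 : 0 < t := Real.tan_pos_of_pos_of_lt_pi_div_two (by linarith) (by linarith)
  have hC0 : 0 < h ^ 2 * (1 + t ^ 2) := by positivity
  -- the interference set
  set S : Set (ℤ × ℤ) := {q : ℤ × ℤ | (q.1 % 2 = q.2 % 2 ∧ q ≠ (0, 0)) ∧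
    (q.1 : ℝ) ^ 2 + 3 * (q.2 : ℝ) ^ 2 ≤ 4 * h ^ 2 * Real.tan (γg / 2) ^ 2 / Δ ^ 2} with hSdef
  set f : ℤ × ℤ → ℝ := fun q =>
    if q.1 % 2 = q.2 % 2 ∧ q ≠ (0, 0) then
      snorm Δ h q.1 q.2 ^ (-α) * (ws (θreg Δ h q.1 q.2) * wg (θreg Δ h q.1 q.2))
    else 0 with hfdef
  -- nonnegativity of f
  have hθmem : ∀ i j : ℤ, θreg Δ h i j ∈ Set.Icc (0 : ℝ) π := fun i j =>
    ⟨Real.arccos_nonneg _, Real.arccos_le_pi _⟩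
  have hfnn : ∀ q : ℤ × ℤ, 0 ≤ f q := by
    intro q
    simp only [hfdef]
    split
    · exact mul_nonneg (Real.rpow_nonneg (Real.sqrt_nonneg _) _)
        (mul_nonneg (hwsnn _ (hθmem q.1 q.2)) (hwgnn _ (hθmem q.1 q.2)))
    · exact le_refl 0
  -- S is finite
  have hSfin : S.Finite := by
    set N : ℕ := ⌈Real.sqrt (4 * h ^ 2 * t ^ 2 / Δ ^ 2)⌉₊ with hN
    apply Set.Finite.subset ((Finset.Icc (-(N:ℤ)) (N:ℤ) ×ˢ Finset.Icc (-(N:ℤ)) (N:ℤ)).finite_toSet)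
    rintro ⟨i, j⟩ ⟨_, hq2⟩
    have hD0 : (0:ℝ) ≤ 4 * h ^ 2 * t ^ 2 / Δ ^ 2 := by positivity
    have key : ∀ k : ℤ, (k:ℝ)^2 ≤ 4 * h ^ 2 * t ^ 2 / Δ ^ 2 → k ∈ Finset.Icc (-(N:ℤ)) (N:ℤ) := by
      intro k hk
      have h1 : |(k:ℝ)| ≤ Real.sqrt (4 * h ^ 2 * t ^ 2 / Δ ^ 2) := by
        rw [← Real.sqrt_sq_eq_abs]; exact Real.sqrt_le_sqrt hk
      have h2 : |(k:ℝ)| ≤ (N:ℝ) := h1.trans (Nat.le_ceil _)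
      have h3 : |k| ≤ (N:ℤ) := by
        rw [← Int.cast_abs] at h2; exact_mod_cast h2
      rw [Finset.mem_Icc]
      exact abs_le.mp h3
    have hi : (i:ℝ)^2 ≤ 4 * h ^ 2 * t ^ 2 / Δ ^ 2 := by nlinarith [sq_nonneg (j:ℝ)]
    have hj : (j:ℝ)^2 ≤ 4 * h ^ 2 * t ^ 2 / Δ ^ 2 := by nlinarith [sq_nonneg (i:ℝ)]
    simp only [Finset.coe_product, Set.mem_prod, Finset.mem_coe]
    exact ⟨key i hi, key j hj⟩
  -- per-term lower bound
  have hkey : ∀ q ∈ S, (h ^ 2 * (1 + t ^ 2)) ^ (-(α / 2)) * (ws γs * wg γg) ≤ f q := by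
    rintro ⟨i, j⟩ ⟨hq1, hq2⟩
    simp only [hfdef, if_pos hq1]
    have hs0 : 0 < snorm Δ h i j := by
      apply Real.sqrt_pos.mpr; positivity
    have hs2 : snorm Δ h i j ^ 2 = (i * Δ / 2 : ℝ) ^ 2 + 3 * (j * Δ / 2 : ℝ) ^ 2 + h ^ 2 := by
      rw [snorm, Real.sq_sqrt]; positivity
    have hsB : snorm Δ h i j ≤ Real.sqrt (h ^ 2 * (1 + t ^ 2)) := by
      rw [snorm]
      apply Real.sqrt_le_sqrt
      have this := hq2
      simp only [Set.mem_setOf_eq, ← ht] at this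
      have hΔ2 : (0:ℝ) < Δ ^ 2 := by positivity
      rw [le_div_iff₀ hΔ2] at this
      nlinarith [this]
    -- angle bound
    have hBcos : Real.sqrt (h ^ 2 * (1 + t ^ 2)) = h / Real.cos (γg / 2) := by
      rw [Real.sqrt_mul (by positivity), Real.sqrt_sq hh.le]
      rw [div_eq_mul_inv]
      congr 1
      rw [← Real.inv_sqrt_one_add_tan_sq hcos, inv_inv]
    have hcosle : Real.cos (γg / 2) ≤ h / snorm Δ h i j := by
      rw [le_div_iff₀ hs0, mul_comm]
      have h5 : snorm Δ h i j * Real.cos (γg / 2) ≤ (h / Real.cos (γg / 2)) * Real.cos (γg / 2) := by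
        apply mul_le_mul_of_nonneg_right _ hcos.le
        rw [← hBcos]; exact hsB
      rwa [div_mul_cancel₀ h hcos.ne'] at h5
    have hθle : θreg Δ h i j ≤ γg / 2 := by
      rw [θreg]
      calc Real.arccos (h / snorm Δ h i j)
          ≤ Real.arccos (Real.cos (γg / 2)) := by
            rw [Real.arccos_eq_pi_div_two_sub_arcsin, Real.arccos_eq_pi_div_two_sub_arcsin]
            have := Real.monotone_arcsin hcosle
            linarith
        _ = γg / 2 := Real.arccos_cos (by linarith) (by linarith)
    -- weight bounds
    have hθm := hθmem i j
    have hws' : ws γs ≤ ws (θreg Δ h i j) :=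
      hws hθm ⟨by linarith [(hθmem i j).1], hγs2⟩ (by linarith)
    have hwg' : wg γg ≤ wg (θreg Δ h i j) :=
      hwg hθm ⟨by linarith, hγgπ.le⟩ (by linarith)
    -- rpow bound
    have hrpow : (h ^ 2 * (1 + t ^ 2)) ^ (-(α / 2)) ≤ snorm Δ h i j ^ (-α) := by
      have h1 : Real.sqrt (h ^ 2 * (1 + t ^ 2)) ^ (-α) ≤ snorm Δ h i j ^ (-α) :=
        Real.rpow_le_rpow_of_nonpos hs0 hsB (by linarith)
      calc (h ^ 2 * (1 + t ^ 2)) ^ (-(α / 2))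
          = Real.sqrt (h ^ 2 * (1 + t ^ 2)) ^ (-α) := by
            rw [Real.sqrt_eq_rpow, ← Real.rpow_mul hC0.le]
            congr 1; ring
        _ ≤ snorm Δ h i j ^ (-α) := h1
    have hwsg0 : 0 ≤ ws γs := hwsnn _ ⟨by linarith, hγs2⟩
    have hwgg0 : 0 ≤ wg γg := hwgnn _ ⟨by linarith, hγgπ.le⟩
    exact mul_le_mul hrpow (mul_le_mul hws' hwg' hwgg0 (hwsnn _ hθm))
      (mul_nonneg hwsg0 hwgg0) (Real.rpow_nonneg hs0.le _)

  -- counting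
  have hX : Xcount h Δ γg = S.ncard := rfl
  set c : ℝ := (h ^ 2 * (1 + t ^ 2)) ^ (-(α / 2)) * (ws γs * wg γg) with hc
  have hwsg0 : 0 ≤ ws γs := hwsnn _ ⟨by linarith, hγs2⟩
  have hwgg0 : 0 ≤ wg γg := hwgnn _ ⟨by linarith, hγgπ.le⟩
  have hc0 : 0 ≤ c := by positivity
  have h1 : ∑ q ∈ hSfin.toFinset, f q ≤ ∑' q, f q :=
    Summable.sum_le_tsum _ (fun q _ => hfnn q) hsum
  have h2 : (S.ncard : ℝ) * c ≤ ∑ q ∈ hSfin.toFinset, f q := by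
    have h3 : ∑ _q ∈ hSfin.toFinset, c ≤ ∑ q ∈ hSfin.toFinset, f q :=
      Finset.sum_le_sum (fun q hq => hkey q (hSfin.mem_toFinset.mp hq))
    rw [Finset.sum_const, nsmul_eq_mul, ← Set.ncard_eq_toFinset_card _ hSfin] at h3
    exact h3
  have hIc : Imin ws wg h α p γs γg = p * c := by rw [Imin, hc]; ring
  have hηf : ηreg ws wg h α p σ2 Δ = (p / σ2) * ∑' q, f q := rfl
  have hmain : (Xcount h Δ γg : ℝ) * Imin ws wg h α p γs γg / σ2 ≤ ηreg ws wg h α p σ2 Δ := by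
    rw [hηf, hX, hIc]
    calc (S.ncard : ℝ) * (p * c) / σ2 = (p / σ2) * ((S.ncard : ℝ) * c) := by ring
      _ ≤ (p / σ2) * ∑' q, f q :=
        mul_le_mul_of_nonneg_left (h2.trans h1) (by positivity)
  refine ⟨hmain, ?_⟩
  -- second part
  have hXI0 : 0 ≤ (Xcount h Δ γg : ℝ) * Imin ws wg h α p γs γg := by
    rw [hIc]; positivity
  have hη0 : 0 ≤ ηreg ws wg h α p σ2 Δ :=
    le_trans (by positivity) hmain
  have hγnn : 0 ≤ (p / σ2) * h ^ (-α) := by positivity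
  have harg : (p / σ2) * h ^ (-α) / (ηreg ws wg h α p σ2 Δ + 1)
      ≤ p * h ^ (-α) / ((Xcount h Δ γg : ℝ) * Imin ws wg h α p γs γg + σ2) := by
    have step1 : (p / σ2) * h ^ (-α) / (ηreg ws wg h α p σ2 Δ + 1)
        ≤ (p / σ2) * h ^ (-α) / ((Xcount h Δ γg : ℝ) * Imin ws wg h α p γs γg / σ2 + 1) := by
      gcongr
    have step2 : (p / σ2) * h ^ (-α) / ((Xcount h Δ γg : ℝ) * Imin ws wg h α p γs γg / σ2 + 1)
        = p * h ^ (-α) / ((Xcount h Δ γg : ℝ) * Imin ws wg h α p γs γg + σ2) := by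
      have d1 : (Xcount h Δ γg : ℝ) * Imin ws wg h α p γs γg + σ2 ≠ 0 := by positivity
      have d2 : (Xcount h Δ γg : ℝ) * Imin ws wg h α p γs γg / σ2 + 1 ≠ 0 := by positivity
      field_simp
    rw [← step2]; exact step1
  rw [Rreg]
  refine mul_le_mul_of_nonneg_left ?_ (by positivity)
  have hpos : (0:ℝ) < 1 + (p / σ2) * h ^ (-α) / (ηreg ws wg h α p σ2 Δ + 1) := by
    have : 0 ≤ (p / σ2) * h ^ (-α) / (ηreg ws wg h α p σ2 Δ + 1) := by
      apply div_nonneg hγnn; linarith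
    linarith
  exact Real.logb_le_logb_of_le one_lt_two hpos (by linarith)
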